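/- Each of the four matrices T₁, T₂, T₃, T₄ is orthogonal (T_jᵀ·T_j = I₈) and is an automorphism of the lattice Λ = M_gen·ℤ⁸: the matrix C_j = M_gen⁻¹·T_j·M_gen has all entries in ℤ and its inverse also has all entries in ℤ (i.e., C_j ∈ GL(8,ℤ), equivalently T_j maps Λ bijectively onto Λ). -/

import Mathlib

open Matrix

/-- The generator matrix of the E₈ lattice (scaled so roots have length 1/√2·√2 = 1). -/
noncomputable def Mgen : Matrix (Fin 8) (Fin 8) ℝ :=
  (1/2 : ℝ) • !![
    0, 0, 0, 0, 0, 0, 0, 1;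
    0, 0, 0, 0, 0, -1, 2, -1;
    -1, -1, 1, 1, -1, 0, 0, 0;
    1, -1, -1, 1, -1, 1, 0, 0;
    -1, 0, 0, 0, 0, 1, 0, -1;
    -1, 0, 0, 0, 0, 0, 0, 1;
    0, 1, -1, 1, -1, 0, 0, 0;
    0, -1, -1, 1, 1, -1, 0, 0]

/-- The generator `T1`. -/
noncomputable def T1 : Matrix (Fin 8) (Fin 8) ℝ :=
  (1/2 : ℝ) • !![
    1, 1, 0, 0, -1, 1, 0, 0;
    -1, 1, 0, 0, -1, -1, 0, 0;
    0, 0, 1, -1, 0, 0, 1, 1;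
    0, 0, 1, 1, 0, 0, 1, -1;
    1, 1, 0, 0, 1, -1, 0, 0;
    -1, 1, 0, 0, 1, 1, 0, 0;
    0, 0, -1, -1, 0, 0, 1, -1;
    0, 0, -1, 1, 0, 0, 1, 1]

/-- The generator `T2`. -/
noncomputable def T2 : Matrix (Fin 8) (Fin 8) ℝ :=
  (1/2 : ℝ) • !![
    1, 1, 0, 0, 1, 1, 0, 0;
    -1, 1, 0, 0, -1, 1, 0, 0;
    0, 0, 1, -1, 0, 0, 1, -1;
    0, 0, 1, 1, 0, 0, -1, -1;
    -1, 1, 0, 0, 1, -1, 0, 0;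
    -1, -1, 0, 0, 1, 1, 0, 0;
    0, 0, -1, 1, 0, 0, 1, -1;
    0, 0, 1, 1, 0, 0, 1, 1]

/-- The generator `T3`. -/
noncomputable def T3 : Matrix (Fin 8) (Fin 8) ℝ :=
  (1/2 : ℝ) • !![
    1, 1, -1, 1, 0, 0, 0, 0;
    -1, 1, 0, 0, 0, 0, 1, -1;
    1, 0, 1, 0, 1, 0, 0, -1;
    -1, 0, 0, 1, 1, 0, -1, 0;
    0, 0, -1, -1, 1, -1, 0, 0;
    0, 0, 0, 0, 1, 1, 1, 1;
    0, -1, 0, 1, 0, -1, 1, 0;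
    0, 1, 1, 0, 0, -1, 0, 1]

/-- The generator `T4`. -/
noncomputable def T4 : Matrix (Fin 8) (Fin 8) ℝ :=
  (1/2 : ℝ) • !![
    1, 0, -1, 0, 0, 1, -1, 0;
    0, 1, 0, 1, 1, 0, 0, -1;
    1, 0, 1, 0, 1, 0, 0, 1;
    0, -1, 0, 1, 0, -1, -1, 0;
    0, -1, -1, 0, 1, 0, 1, 0;
    -1, 0, 0, 1, 0, 1, 0, 1;
    1, 0, 0, 1, -1, 0, 1, 0;
    0, 1, -1, 0, 0, -1, 0, 1]

/-! Write `Mgen = N / 2` and `Tⱼ = Aⱼ / 2` with integer matrices `N`, `Aⱼ`. Orthogonality of `Tⱼ`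
is the integer identity `Aⱼᵀ Aⱼ = 4`. With the explicit integer matrix `N' = 2 N⁻¹` (so that
`Mgen⁻¹ = N'`), the conjugate `Mgen⁻¹ Tⱼ Mgen` equals `N' Aⱼ N / 4`, so it is integral as soon as
every entry of `N' Aⱼ N` is divisible by `4`. Since `Tⱼ` is orthogonal, the inverse of the conjugate
is the conjugate of `Tⱼᵀ = Aⱼᵀ / 2`, and the same divisibility test for `Aⱼᵀ` settles it. All the
integer identities are finite computations. -/

section IntCast

variable {n : Type*}

lemma Matrix.map_intCast_mul [Fintype n] (A B : Matrix n n ℤ) :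
    (A * B).map ((↑) : ℤ → ℝ) = A.map (↑) * B.map (↑) :=
  Matrix.map_mul (f := Int.castRingHom ℝ)

lemma Matrix.map_intCast_smul (m : ℤ) (A : Matrix n n ℤ) :
    (m • A).map ((↑) : ℤ → ℝ) = (m : ℝ) • A.map (↑) := by
  ext i j
  simp only [Matrix.map_apply, Matrix.smul_apply, smul_eq_mul, Int.cast_mul]

lemma Matrix.map_intCast_one [DecidableEq n] : (1 : Matrix n n ℤ).map ((↑) : ℤ → ℝ) = 1 :=
  Matrix.map_one _ Int.cast_zero Int.cast_one

lemma Matrix.exists_eq_smul_of_forall_dvd {m : ℤ} (X : Matrix n n ℤ) (h : ∀ i j, m ∣ X i j) :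
    ∃ C : Matrix n n ℤ, X = m • C :=
  ⟨X.map (· / m), by ext i j; simp [Int.mul_ediv_cancel' (h i j)]⟩

end IntCast

section Conjugation

variable {n K : Type*} [Fintype n] [DecidableEq n] [Field K]

lemma Matrix.inv_conj_eq_conj_transpose {M T : Matrix n n K} (hM : IsUnit M.det)
    (hT : Tᵀ * T = 1) : (M⁻¹ * T * M)⁻¹ = M⁻¹ * Tᵀ * M := by
  refine inv_eq_left_inv ?_
  calc M⁻¹ * Tᵀ * M * (M⁻¹ * T * M) = M⁻¹ * Tᵀ * (M * M⁻¹) * T * M := by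
        simp only [Matrix.mul_assoc]
    _ = 1 := by rw [Matrix.mul_nonsing_inv M hM, Matrix.mul_one, Matrix.mul_assoc _ Tᵀ,
        hT, Matrix.mul_one, Matrix.nonsing_inv_mul M hM]

end Conjugation

/-- `M⁻¹ T M ∈ GL(n, ℤ)` says that `T` maps the lattice `M ℤⁿ` onto itself. -/
def IsOrthogonalLatticeAut {n : Type*} [Fintype n] [DecidableEq n] (M T : Matrix n n ℝ) :
    Prop :=
  Tᵀ * T = 1 ∧
    (∃ C : Matrix n n ℤ, M⁻¹ * T * M = C.map (↑)) ∧
    ∃ D : Matrix n n ℤ, (M⁻¹ * T * M)⁻¹ = D.map (↑)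

section HalfIntegral

variable {n : Type*}

noncomputable def halfCast (A : Matrix n n ℤ) : Matrix n n ℝ :=
  (1 / 2 : ℝ) • A.map (↑)

lemma halfCast_transpose (A : Matrix n n ℤ) : (halfCast A)ᵀ = halfCast Aᵀ := by
  rw [halfCast, halfCast, Matrix.transpose_smul, Matrix.transpose_map]

variable [Fintype n] [DecidableEq n]

lemma halfCast_mul_halfCast (A B : Matrix n n ℤ) :
    halfCast A * halfCast B = (1 / 4 : ℝ) • (A * B).map (↑) := by
  rw [halfCast, halfCast, Matrix.map_intCast_mul, smul_mul_smul_comm]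
  norm_num

lemma halfCast_transpose_mul_self {A : Matrix n n ℤ} (hA : Aᵀ * A = (4 : ℤ) • 1) :
    (halfCast A)ᵀ * halfCast A = 1 := by
  rw [halfCast_transpose, halfCast_mul_halfCast, hA, Matrix.map_intCast_smul,
    Matrix.map_intCast_one, smul_smul]
  norm_num

variable {N N' : Matrix n n ℤ}

lemma map_mul_halfCast (hN : N' * N = (2 : ℤ) • 1) : N'.map (↑) * halfCast N = 1 := by
  rw [halfCast, Matrix.mul_smul, ← Matrix.map_intCast_mul, hN, Matrix.map_intCast_smul,
    Matrix.map_intCast_one, smul_smul]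
  norm_num

lemma inv_halfCast (hN : N' * N = (2 : ℤ) • 1) : (halfCast N)⁻¹ = N'.map (↑) :=
  inv_eq_left_inv (map_mul_halfCast hN)

lemma exists_inv_halfCast_conj_eq_map (hN : N' * N = (2 : ℤ) • 1) {A : Matrix n n ℤ}
    (hA : ∀ i j, 4 ∣ (N' * A * N) i j) :
    ∃ C : Matrix n n ℤ, (halfCast N)⁻¹ * halfCast A * halfCast N = C.map (↑) := by
  obtain ⟨C, hC⟩ := (N' * A * N).exists_eq_smul_of_forall_dvd hA
  refine ⟨C, ?_⟩
  rw [inv_halfCast hN, Matrix.mul_assoc, halfCast_mul_halfCast, Matrix.mul_smul,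
    ← Matrix.map_intCast_mul, ← Matrix.mul_assoc, hC, Matrix.map_intCast_smul, smul_smul]
  norm_num

lemma isOrthogonalLatticeAut_halfCast (hN : N' * N = (2 : ℤ) • 1) {A : Matrix n n ℤ}
    (hA : Aᵀ * A = (4 : ℤ) • 1) (hAN : ∀ i j, 4 ∣ (N' * A * N) i j)
    (hAtN : ∀ i j, 4 ∣ (N' * Aᵀ * N) i j) :
    IsOrthogonalLatticeAut (halfCast N) (halfCast A) := by
  have hT := halfCast_transpose_mul_self hA
  have hM : IsUnit (halfCast N).det :=
    Matrix.isUnit_det_of_left_inverse (map_mul_halfCast hN)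
  refine ⟨hT, exists_inv_halfCast_conj_eq_map hN hAN, ?_⟩
  rw [Matrix.inv_conj_eq_conj_transpose hM hT, halfCast_transpose]
  exact exists_inv_halfCast_conj_eq_map hN hAtN

end HalfIntegral

namespace E8

def N : Matrix (Fin 8) (Fin 8) ℤ := !![
    0, 0, 0, 0, 0, 0, 0, 1;
    0, 0, 0, 0, 0, -1, 2, -1;
    -1, -1, 1, 1, -1, 0, 0, 0;
    1, -1, -1, 1, -1, 1, 0, 0;
    -1, 0, 0, 0, 0, 1, 0, -1;
    -1, 0, 0, 0, 0, 0, 0, 1;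
    0, 1, -1, 1, -1, 0, 0, 0;
    0, -1, -1, 1, 1, -1, 0, 0]

/-- `2 N⁻¹ = Mgen⁻¹`, integral because `ℤ⁸ ⊆ Λ`. -/
def twoNInv : Matrix (Fin 8) (Fin 8) ℤ := !![
    2, 0, 0, 0, 0, -2, 0, 0;
    3, 0, 0, -1, 1, -2, 1, 0;
    4, 0, 1, -1, 1, -3, 0, 0;
    6, 0, 1, -1, 2, -4, 1, 1;
    5, 0, 0, -1, 2, -3, 0, 1;
    4, 0, 0, 0, 2, -2, 0, 0;
    3, 1, 0, 0, 1, -1, 0, 0;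
    2, 0, 0, 0, 0, 0, 0, 0]

def A1 : Matrix (Fin 8) (Fin 8) ℤ := !![
    1, 1, 0, 0, -1, 1, 0, 0;
    -1, 1, 0, 0, -1, -1, 0, 0;
    0, 0, 1, -1, 0, 0, 1, 1;
    0, 0, 1, 1, 0, 0, 1, -1;
    1, 1, 0, 0, 1, -1, 0, 0;
    -1, 1, 0, 0, 1, 1, 0, 0;
    0, 0, -1, -1, 0, 0, 1, -1;
    0, 0, -1, 1, 0, 0, 1, 1]

def A2 : Matrix (Fin 8) (Fin 8) ℤ := !![
    1, 1, 0, 0, 1, 1, 0, 0;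
    -1, 1, 0, 0, -1, 1, 0, 0;
    0, 0, 1, -1, 0, 0, 1, -1;
    0, 0, 1, 1, 0, 0, -1, -1;
    -1, 1, 0, 0, 1, -1, 0, 0;
    -1, -1, 0, 0, 1, 1, 0, 0;
    0, 0, -1, 1, 0, 0, 1, -1;
    0, 0, 1, 1, 0, 0, 1, 1]

def A3 : Matrix (Fin 8) (Fin 8) ℤ := !![
    1, 1, -1, 1, 0, 0, 0, 0;
    -1, 1, 0, 0, 0, 0, 1, -1;
    1, 0, 1, 0, 1, 0, 0, -1;
    -1, 0, 0, 1, 1, 0, -1, 0;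
    0, 0, -1, -1, 1, -1, 0, 0;
    0, 0, 0, 0, 1, 1, 1, 1;
    0, -1, 0, 1, 0, -1, 1, 0;
    0, 1, 1, 0, 0, -1, 0, 1]

def A4 : Matrix (Fin 8) (Fin 8) ℤ := !![
    1, 0, -1, 0, 0, 1, -1, 0;
    0, 1, 0, 1, 1, 0, 0, -1;
    1, 0, 1, 0, 1, 0, 0, 1;
    0, -1, 0, 1, 0, -1, -1, 0;
    0, -1, -1, 0, 1, 0, 1, 0;
    -1, 0, 0, 1, 0, 1, 0, 1;
    1, 0, 0, 1, -1, 0, 1, 0;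
    0, 1, -1, 0, 0, -1, 0, 1]

lemma Mgen_eq_halfCast : Mgen = halfCast N := by
  rw [Mgen, halfCast]; congr 1; ext i j; fin_cases i <;> fin_cases j <;> norm_num [N]

lemma T1_eq_halfCast : T1 = halfCast A1 := by
  rw [T1, halfCast]; congr 1; ext i j; fin_cases i <;> fin_cases j <;> norm_num [A1]

lemma T2_eq_halfCast : T2 = halfCast A2 := by
  rw [T2, halfCast]; congr 1; ext i j; fin_cases i <;> fin_cases j <;> norm_num [A2]

lemma T3_eq_halfCast : T3 = halfCast A3 := by
  rw [T3, halfCast]; congr 1; ext i j; fin_cases i <;> fin_cases j <;> norm_num [A3]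

lemma T4_eq_halfCast : T4 = halfCast A4 := by
  rw [T4, halfCast]; congr 1; ext i j; fin_cases i <;> fin_cases j <;> norm_num [A4]

lemma isOrthogonalLatticeAut_Mgen {A : Matrix (Fin 8) (Fin 8) ℤ} (hA : Aᵀ * A = (4 : ℤ) • 1)
    (hAN : ∀ i j, 4 ∣ (twoNInv * A * N) i j) (hAtN : ∀ i j, 4 ∣ (twoNInv * Aᵀ * N) i j) :
    IsOrthogonalLatticeAut Mgen (halfCast A) :=
  Mgen_eq_halfCast ▸ isOrthogonalLatticeAut_halfCast (by decide) hA hAN hAtN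

end E8

open E8 in
/-- Each of `T1, T2, T3, T4` is orthogonal and is an automorphism
of the E₈ lattice `Λ = Mgen · ℤ⁸`: the matrix `C = Mgen⁻¹ * T * Mgen` has integer
entries and its inverse also has integer entries, i.e. `C ∈ GL(8,ℤ)`. -/
theorem generators_orthogonal_lattice_automorphisms :
    ∀ T ∈ ({T1, T2, T3, T4} : Set (Matrix (Fin 8) (Fin 8) ℝ)),
      Tᵀ * T = 1 ∧
      (∃ C : Matrix (Fin 8) (Fin 8) ℤ,
        Mgen⁻¹ * T * Mgen = C.map (fun z : ℤ => (z : ℝ))) ∧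
      (∃ D : Matrix (Fin 8) (Fin 8) ℤ,
        (Mgen⁻¹ * T * Mgen)⁻¹ = D.map (fun z : ℤ => (z : ℝ))) := by
  rintro T (rfl | rfl | rfl | rfl)
  · rw [T1_eq_halfCast]
    exact isOrthogonalLatticeAut_Mgen (by decide) (by decide) (by decide)
  · rw [T2_eq_halfCast]
    exact isOrthogonalLatticeAut_Mgen (by decide) (by decide) (by decide)
  · rw [T3_eq_halfCast]
    exact isOrthogonalLatticeAut_Mgen (by decide) (by decide) (by decide)
  · rw [T4_eq_halfCast]
    exact isOrthogonalLatticeAut_Mgen (by decide) (by decide) (by decide)
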